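/- (Piggybacking Design 1, repair of a systematic node in the last group.) Let F be a field, r ≥ 2, t ≥ 1, and k = r·t. Let p : Fin r → Fin k → F be the parity encoding vectors, and let ℓ : Fin k lie in the last group G_{r−1} = {i : (r−1)·t ≤ i < k}. Assume p 0 ℓ ≠ 0 and p (r−1) ℓ ≠ 0. Then there exists a function φ taking k + t + r − 2 field elements to F × F such that for all messages a, b : Fin k → F, applying φ to the values (b i for each i ≠ ℓ), Σ_i p 0 i · b i, the transformed symbol Σ_{i ∉ G_{r−2}} p (r−1) i · a i − Σ_i p (r−1) i · b i, the r−2 symbols Σ_i p m i · b i + Σ_{i ∈ G_{m−1}} p (r−1) i · a i for m = 1, …, r−2, and (a i for each i ∈ G_{r−1} with i ≠ ℓ) yields (a ℓ, b ℓ). That is, the failed systematic node ℓ in the last group is repaired by reading and downloading only k + t + r − 2 symbols. -/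

import Mathlib

/-!
The `b`-instance is an MDS codeword with one erasure, so `b ℓ` is solved from the first parity
symbol. With all of `b` known, the `b`-parts of the other downloaded parity symbols can be
subtracted: the piggybacks then give the `p (r-1)`-weighted sums of `a` over the groups
`G_0, …, G_{r-3}`, and removing these from the transformed symbol leaves that sum over the last
group alone, a single linear equation in `a ℓ` once the other `a i` of the group are known.
-/

open Finset

section Recovery

variable {ι F : Type*} [DecidableEq ι]

def insertAt {α : Type*} (ℓ : ι) (v : α) (x : {i // i ≠ ℓ} → α) : ι → α :=
  fun i => if h : i = ℓ then v else x ⟨i, h⟩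

@[simp]
theorem insertAt_apply_restrict {α : Type*} (x : ι → α) (ℓ : ι) :
    insertAt ℓ (x ℓ) (fun i => x i) = x := by
  ext i
  by_cases h : i = ℓ <;> simp [insertAt, h]

variable [Fintype ι] [Field F]

theorem Finset.sum_filter_eq_add_sum_subtype_ne {M : Type*} [AddCommMonoid M]
    (P : ι → Prop) [DecidablePred P] {ℓ : ι} (hℓ : P ℓ) (f : ι → M) :
    ∑ i ∈ univ.filter P, f i = f ℓ + ∑ i : {i // P i ∧ i ≠ ℓ}, f i := by
  rw [← add_sum_erase _ _ (mem_filter.2 ⟨mem_univ ℓ, hℓ⟩)]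
  exact congrArg _ (sum_subtype _ (fun i => by simp [and_comm]) f)

theorem eq_sum_sub_sum_subtype_ne_div (c x : ι → F) {ℓ : ι} (hc : c ℓ ≠ 0) :
    x ℓ = (∑ i, c i * x i - ∑ i : {i // i ≠ ℓ}, c i * x i) / c ℓ := by
  rw [Fintype.sum_eq_add_sum_subtype_ne _ ℓ, add_sub_cancel_right, mul_div_cancel_left₀ _ hc]

theorem eq_sum_filter_sub_sum_subtype_ne_div (P : ι → Prop) [DecidablePred P]
    (c x : ι → F) {ℓ : ι} (hℓ : P ℓ) (hc : c ℓ ≠ 0) :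
    x ℓ = (∑ i ∈ univ.filter P, c i * x i - ∑ i : {i // P i ∧ i ≠ ℓ}, c i * x i) / c ℓ := by
  rw [sum_filter_eq_add_sum_subtype_ne P hℓ, add_sub_cancel_right, mul_div_cancel_left₀ _ hc]

end Recovery

section Groups

variable {M : Type*} [AddCommMonoid M] {k : ℕ}

theorem sum_groups_eq_sum_filter_lt (t n : ℕ) (g : Fin k → M) :
    ∑ m : Fin n, ∑ i ∈ univ.filter (fun i : Fin k => m * t ≤ (i : ℕ) ∧ (i : ℕ) < (m + 1) * t), g i
      = ∑ i ∈ univ.filter (fun i : Fin k => (i : ℕ) < n * t), g i := by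
  induction n with
  | zero => simp
  | succ n ih =>
    rw [Fin.sum_univ_castSucc]
    simp only [Fin.val_castSucc, Fin.val_last, ih]
    rw [← sum_union (disjoint_filter.2 fun i _ h₁ h₂ => by omega), ← filter_or]
    congr 1
    ext i
    simp only [mem_filter, mem_univ, true_and, Nat.succ_mul]
    omega

theorem sum_filter_not_Ico_eq (g : Fin k → M) {u v : ℕ} (huv : u ≤ v) :
    ∑ i ∈ univ.filter (fun i : Fin k => ¬(u ≤ (i : ℕ) ∧ (i : ℕ) < v)), g i
      = ∑ i ∈ univ.filter (fun i : Fin k => (i : ℕ) < u), g i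
        + ∑ i ∈ univ.filter (fun i : Fin k => v ≤ (i : ℕ)), g i := by
  rw [← sum_union (disjoint_filter.2 fun i _ h₁ h₂ => by omega), ← filter_or]
  congr 1
  ext i
  simp only [mem_filter, mem_univ, true_and]
  omega

end Groups

noncomputable def design1RepairLast {F : Type*} [Field F] {k n : ℕ} (u : ℕ)
    (p₀ pLast : Fin k → F) (pMid : Fin n → Fin k → F) (ℓ : Fin k)
    (bRest : {i : Fin k // i ≠ ℓ} → F) (s₀ sLast : F) (sMid : Fin n → F)
    (aRest : {i : Fin k // u ≤ (i : ℕ) ∧ i ≠ ℓ} → F) : F × F :=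
  let b := insertAt ℓ ((s₀ - ∑ i : {i // i ≠ ℓ}, p₀ i * bRest i) / p₀ ℓ) bRest
  let lastGroupSum := sLast + ∑ i, pLast i * b i - ∑ m, (sMid m - ∑ i, pMid m i * b i)
  ((lastGroupSum - ∑ i : {i : Fin k // u ≤ (i : ℕ) ∧ i ≠ ℓ}, pLast i * aRest i) / pLast ℓ, b ℓ)

/-- Piggybacking Design 1, repair of a systematic node `ℓ` in the last group
`G_{r-1} = {i : (r-1)·t ≤ i < k}`: `ℓ` is repaired by reading and downloading only
`k + t + r − 2` symbols, namely the `k - 1` symbols `b i` (`i ≠ ℓ`), the first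
parity symbol of the `b`-instance, the transformed first-instance symbol of the last
parity node, the `r − 2` piggybacked parity symbols, and the `t − 1` symbols `a i`
for the other members `i` of the last group. -/
theorem design1_repair_systematic_last_group
    {F : Type*} [Field F] {r t : ℕ} (hr : 2 ≤ r)
    {k : ℕ}
    (p : Fin r → Fin k → F) (ℓ : Fin k)
    (hℓ : (r - 1) * t ≤ (ℓ : ℕ))
    (hp0 : p ⟨0, by omega⟩ ℓ ≠ 0) (hpl : p ⟨r - 1, by omega⟩ ℓ ≠ 0) :
    ∃ φ : ({i : Fin k // i ≠ ℓ} → F) → F → F → (Fin (r - 2) → F) →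
        ({i : Fin k // (r - 1) * t ≤ (i : ℕ) ∧ i ≠ ℓ} → F) → F × F,
      ∀ a b : Fin k → F,
        φ (fun i => b i) (∑ i, p ⟨0, by omega⟩ i * b i)
          (∑ i ∈ Finset.univ.filter
              (fun i : Fin k => ¬((r - 2) * t ≤ (i : ℕ) ∧ (i : ℕ) < (r - 1) * t)),
              p ⟨r - 1, by omega⟩ i * a i
            - ∑ i, p ⟨r - 1, by omega⟩ i * b i)
          (fun m : Fin (r - 2) =>
            ∑ i, p ⟨(m : ℕ) + 1, by have := m.isLt; omega⟩ i * b i +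
              ∑ i ∈ Finset.univ.filter
                  (fun i : Fin k =>
                    (m : ℕ) * t ≤ (i : ℕ) ∧ (i : ℕ) < ((m : ℕ) + 1) * t),
                p ⟨r - 1, by omega⟩ i * a i)
          (fun i => a i) = (a ℓ, b ℓ) := by
  refine ⟨design1RepairLast ((r - 1) * t) (p ⟨0, by omega⟩) (p ⟨r - 1, by omega⟩)
    (fun m => p ⟨(m : ℕ) + 1, by have := m.isLt; omega⟩) ℓ, fun a b => ?_⟩
  have hb : insertAt ℓ ((∑ i, p ⟨0, by omega⟩ i * b i
      - ∑ i : {i // i ≠ ℓ}, p ⟨0, by omega⟩ i * b i) / p ⟨0, by omega⟩ ℓ) (fun i => b i) = b := by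
    rw [← eq_sum_sub_sum_subtype_ne_div _ _ hp0, insertAt_apply_restrict]
  simp only [design1RepairLast, hb, add_sub_cancel_left, sum_groups_eq_sum_filter_lt,
    sum_filter_not_Ico_eq _ (Nat.mul_le_mul_right t (by omega : r - 2 ≤ r - 1)), sub_add_cancel]
  rw [← eq_sum_filter_sub_sum_subtype_ne_div (fun i : Fin k => (r - 1) * t ≤ (i : ℕ)) _ _ hℓ hpl]
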